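/- Define C(α) = √α + (1/(2π)) ∑_{k≥1} k^(−2) ∫_0^α √y (1 − cos(2πk²/y) + sin(2πk²/y)) dy for α ≥ 0 (the series converges absolutely). Then there exists a constant M > 0 such that for all 0 < α ≤ 1: | C(α) − √α − (π/18) α^(3/2) | ≤ M α^(5/2). -/

import Mathlib

open Real

/-- The Conrey–Farmer–Soundararajan transition function
`C(α) = √α + (1/(2π)) ∑_{k≥1} k^(-2) ∫_0^α √y (1 - cos(2πk²/y) + sin(2πk²/y)) dy`. -/
noncomputable def CFS (α : ℝ) : ℝ :=
  Real.sqrt α + 1 / (2 * Real.pi) *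
    ∑' k : ℕ+, ((k : ℝ) ^ 2)⁻¹ *
      ∫ y in (0:ℝ)..α, Real.sqrt y *
        (1 - Real.cos (2 * Real.pi * (k : ℝ) ^ 2 / y)
           + Real.sin (2 * Real.pi * (k : ℝ) ^ 2 / y))

/-!
With `c = 2πk²`, the `k`-th integral is `(2/3) α^(3/2) + ∫₀^α √y (sin - cos)(c/y) dy`, and the
main terms add up to `(1/(2π)) ζ(2) (2/3) α^(3/2) = (π/18) α^(3/2)`. For `s' = t` one has
`d/dy [y^(5/2) s(c/y)] = (5/2) y^(3/2) s(c/y) - c √y t(c/y)`, so integrating by parts bounds each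
oscillatory integral by `(7/2) α^(5/2) / c`; summing these errors against `ζ(2) = π²/6` gives
`M = 7/24`.
-/

open MeasureTheory intervalIntegral Set

lemma rpow_natCast_add_half {x : ℝ} (hx : 0 ≤ x) (n : ℕ) : x ^ ((n : ℝ) + 1 / 2) = x ^ n * √x := by
  rw [rpow_add' hx (by positivity), rpow_natCast, sqrt_eq_rpow]

lemma integral_sqrt {α : ℝ} (hα : 0 ≤ α) : ∫ y in (0:ℝ)..α, √y = 2 / 3 * (α * √α) := by
  simp_rw [sqrt_eq_rpow]
  rw [integral_rpow (by norm_num), zero_rpow (by norm_num), ← rpow_one_add' hα (by norm_num)]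
  ring_nf

lemma intervalIntegrable_mul_of_abs_le {f g : ℝ → ℝ} {C : ℝ} (hf : Continuous f)
    (hg : Measurable g) (hgC : ∀ x, |g x| ≤ C) (a b : ℝ) :
    IntervalIntegrable (fun x => f x * g x) volume a b := by
  rw [intervalIntegrable_iff]
  exact (intervalIntegrable_iff.1 (hf.intervalIntegrable a b)).mul_bdd hg.aestronglyMeasurable
    (ae_of_all _ hgC)

lemma continuous_mul_comp_div {φ s : ℝ → ℝ} (hφ : Continuous φ) (hφ0 : φ 0 = 0)
    (hs : Continuous s) (hs1 : ∀ x, |s x| ≤ 1) (c : ℝ) :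
    Continuous fun y => φ y * s (c / y) := by
  refine continuous_iff_continuousAt.2 fun y => ?_
  rcases eq_or_ne y 0 with rfl | hy
  · have hbound : ∀ y, ‖φ y * s (c / y)‖ ≤ |φ y| := fun y => by
      simpa [abs_mul] using mul_le_mul_of_nonneg_left (hs1 (c / y)) (abs_nonneg (φ y))
    have := squeeze_zero_norm hbound (by simpa [hφ0] using (hφ.abs.tendsto 0))
    simpa [ContinuousAt, hφ0] using this
  · exact hφ.continuousAt.mul (hs.continuousAt.comp (continuousAt_const.div continuousAt_id hy))

section Oscillatory

variable {s t : ℝ → ℝ}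

lemma hasDerivAt_sq_mul_sqrt_mul_comp_div (hst : ∀ x, HasDerivAt s (t x) x) (c : ℝ) {y : ℝ}
    (hy : 0 < y) :
    HasDerivAt (fun y => y ^ 2 * √y * s (c / y))
      (5 / 2 * (y * √y * s (c / y)) - c * (√y * t (c / y))) y := by
  have h1 : HasDerivAt (fun y : ℝ => y ^ 2 * √y) (5 / 2 * (y * √y)) y := by
    refine ((hasDerivAt_pow 2 y).mul (hasDerivAt_sqrt hy.ne')).congr_deriv ?_
    field_simp
    linear_combination (-y) * sq_sqrt hy.le
  have h2 : HasDerivAt (fun y => c / y) (-(c / y ^ 2)) y := by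
    simpa [div_eq_mul_inv] using (hasDerivAt_inv hy.ne').const_mul c
  refine (h1.mul ((hst (c / y)).comp y h2)).congr_deriv ?_
  field_simp
  simp only [Function.comp_apply]
  ring

lemma mul_integral_sqrt_mul_comp_div (hst : ∀ x, HasDerivAt s (t x) x) (hs : ∀ x, |s x| ≤ 1)
    (ht : ∀ x, |t x| ≤ 1) (c : ℝ) {α : ℝ} (hα : 0 ≤ α) :
    c * ∫ y in (0:ℝ)..α, √y * t (c / y)
      = 5 / 2 * (∫ y in (0:ℝ)..α, y * √y * s (c / y)) - α ^ 2 * √α * s (c / α) := by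
  have hs_cont : Continuous s := continuous_iff_continuousAt.2 fun x => (hst x).continuousAt
  have ht_meas : Measurable t := funext (fun x => (hst x).deriv) ▸ measurable_deriv s
  have hdiv : Measurable fun y : ℝ => c / y := by fun_prop
  have int_s := intervalIntegrable_mul_of_abs_le (f := fun y => y * √y)
    (g := fun y => s (c / y)) (by fun_prop)
    (hs_cont.measurable.comp hdiv) (fun y => hs (c / y)) 0 α
  have int_t := intervalIntegrable_mul_of_abs_le (g := fun y => t (c / y)) continuous_sqrt
    (ht_meas.comp hdiv) (fun y => ht (c / y)) 0 α
  have ftc := integral_eq_sub_of_hasDerivAt_of_le hα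
    (continuous_mul_comp_div (φ := fun y => y ^ 2 * √y) (by fun_prop) (by simp) hs_cont hs c
      |>.continuousOn)
    (fun y hy => hasDerivAt_sq_mul_sqrt_mul_comp_div hst c hy.1)
    ((int_s.const_mul _).sub (int_t.const_mul c))
  rw [integral_sub (int_s.const_mul _) (int_t.const_mul c), intervalIntegral.integral_const_mul,
    intervalIntegral.integral_const_mul] at ftc
  simp only [sqrt_zero, mul_zero, zero_mul, sub_zero] at ftc
  linarith

lemma abs_integral_sqrt_mul_comp_div_le (hst : ∀ x, HasDerivAt s (t x) x) (hs : ∀ x, |s x| ≤ 1)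
    (ht : ∀ x, |t x| ≤ 1) {c α : ℝ} (hc : 0 < c) (hα : 0 ≤ α) :
    |∫ y in (0:ℝ)..α, √y * t (c / y)| ≤ 7 / 2 * (α ^ 2 * √α) / c := by
  have hJ : |∫ y in (0:ℝ)..α, y * √y * s (c / y)| ≤ α * √α * α := by
    simpa [abs_of_nonneg hα] using norm_integral_le_of_norm_le_const (a := 0) (b := α)
      (C := α * √α) (f := fun y => y * √y * s (c / y)) fun y hy => by
        rw [uIoc_of_le hα] at hy
        rw [norm_eq_abs, abs_mul, abs_mul, abs_of_pos hy.1, abs_of_nonneg (sqrt_nonneg y)]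
        exact mul_le_of_le_one_right (by positivity [hy.1]) (hs _) |>.trans
          (mul_le_mul hy.2 (sqrt_le_sqrt hy.2) (sqrt_nonneg y) hα)
  have hboundary : |α ^ 2 * √α * s (c / α)| ≤ α ^ 2 * √α := by
    rw [abs_mul, abs_of_nonneg (by positivity)]
    exact mul_le_of_le_one_right (by positivity) (hs _)
  suffices h : |c * ∫ y in (0:ℝ)..α, √y * t (c / y)| ≤ 7 / 2 * (α ^ 2 * √α) by
    rwa [abs_mul, abs_of_pos hc, ← le_div_iff₀' hc] at h
  rw [mul_integral_sqrt_mul_comp_div hst hs ht c hα]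
  calc _ ≤ |5 / 2 * ∫ y in (0:ℝ)..α, y * √y * s (c / y)| + |α ^ 2 * √α * s (c / α)| :=
        abs_sub _ _
    _ ≤ 5 / 2 * (α * √α * α) + α ^ 2 * √α := by
        rw [abs_mul, abs_of_pos (by norm_num : (0:ℝ) < 5 / 2)]
        gcongr
    _ = 7 / 2 * (α ^ 2 * √α) := by ring

end Oscillatory

lemma abs_integral_sqrt_mul_one_sub_cos_add_sin_sub_le {c α : ℝ} (hc : 0 < c) (hα : 0 ≤ α) :
    |(∫ y in (0:ℝ)..α, √y * (1 - cos (c / y) + sin (c / y))) - 2 / 3 * (α * √α)|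
      ≤ 7 * (α ^ 2 * √α) / c := by
  have int_cos := intervalIntegrable_mul_of_abs_le (g := fun y => cos (c / y)) continuous_sqrt
    (by fun_prop) (fun y => abs_cos_le_one (c / y)) 0 α
  have int_sin := intervalIntegrable_mul_of_abs_le (g := fun y => sin (c / y)) continuous_sqrt
    (by fun_prop) (fun y => abs_sin_le_one (c / y)) 0 α
  have hcos := abs_integral_sqrt_mul_comp_div_le hasDerivAt_sin abs_sin_le_one abs_cos_le_one
    hc hα
  have hsin := abs_integral_sqrt_mul_comp_div_le (s := fun x => -cos x)
    (fun x => by simpa using (hasDerivAt_cos x).fun_neg) (fun x => by simpa using abs_cos_le_one x)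
    abs_sin_le_one hc hα
  have hsplit : ∫ y in (0:ℝ)..α, √y * (1 - cos (c / y) + sin (c / y))
      = (∫ y in (0:ℝ)..α, √y) - (∫ y in (0:ℝ)..α, √y * cos (c / y))
        + ∫ y in (0:ℝ)..α, √y * sin (c / y) := by
    simp only [mul_add, mul_sub, mul_one]
    rw [integral_add ((continuous_sqrt.intervalIntegrable 0 α).sub int_cos) int_sin,
      integral_sub (continuous_sqrt.intervalIntegrable 0 α) int_cos]
  rw [hsplit, integral_sqrt hα]
  calc _ = |(∫ y in (0:ℝ)..α, √y * sin (c / y)) - ∫ y in (0:ℝ)..α, √y * cos (c / y)| := by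
        ring_nf
    _ ≤ 7 / 2 * (α ^ 2 * √α) / c + 7 / 2 * (α ^ 2 * √α) / c :=
        (abs_sub _ _).trans (add_le_add hsin hcos)
    _ = 7 * (α ^ 2 * √α) / c := by ring

lemma hasSum_inv_sq_pnat : HasSum (fun k : ℕ+ => ((k : ℝ) ^ 2)⁻¹) (π ^ 2 / 6) :=
  hasSum_pnat_iff (f := fun n : ℕ => ((n : ℝ) ^ 2)⁻¹) |>.2 <| by
    simpa [one_div] using hasSum_zeta_two

lemma abs_tsum_mul_sub_le {ι : Type*} {w x : ι → ℝ} {S a b : ℝ} (hw : HasSum w S)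
    (hw0 : ∀ i, 0 ≤ w i) (hx : ∀ i, |x i - a| ≤ b) :
    |∑' i, w i * x i - S * a| ≤ S * b := by
  have hdev : ∀ i, |w i * (x i - a)| ≤ w i * b := fun i => by
    rw [abs_mul, abs_of_nonneg (hw0 i)]
    exact mul_le_mul_of_nonneg_left (hx i) (hw0 i)
  have hdev_sum : Summable fun i => w i * (x i - a) :=
    Summable.of_norm_bounded (hw.summable.mul_right b) hdev
  have hsplit : ∑' i, w i * x i = S * a + ∑' i, w i * (x i - a) := by
    rw [← (hw.mul_right a).tsum_eq, ← Summable.tsum_add (hw.mul_right a).summable hdev_sum]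
    exact tsum_congr fun i => by ring
  rw [hsplit, add_sub_cancel_left]
  calc |∑' i, w i * (x i - a)| ≤ ∑' i, |w i * (x i - a)| := by
        simpa only [Real.norm_eq_abs] using norm_tsum_le_tsum_norm hdev_sum.norm
    _ ≤ ∑' i, w i * b := Summable.tsum_le_tsum hdev hdev_sum.abs (hw.summable.mul_right b)
    _ = S * b := (hw.mul_right b).tsum_eq

/-- as `α → 0⁺`, `C(α) = √α + (π/18) α^(3/2) + O(α^(5/2))`. -/
theorem CFS_at_zero :
    ∃ M > (0:ℝ), ∀ α : ℝ, 0 < α → α ≤ 1 →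
      |CFS α - Real.sqrt α - Real.pi / 18 * α ^ ((3:ℝ)/2)| ≤ M * α ^ ((5:ℝ)/2) := by
  refine ⟨7 / 24, by norm_num, fun α hα _ => ?_⟩
  rw [CFS, show (3 : ℝ) / 2 = (1 : ℕ) + 1 / 2 by norm_num,
    show (5 : ℝ) / 2 = (2 : ℕ) + 1 / 2 by norm_num, rpow_natCast_add_half hα.le,
    rpow_natCast_add_half hα.le, pow_one]
  set I : ℕ+ → ℝ := fun k => ∫ y in (0:ℝ)..α, √y *
    (1 - cos (2 * π * (k : ℝ) ^ 2 / y) + sin (2 * π * (k : ℝ) ^ 2 / y))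
  have hI : ∀ k : ℕ+, |I k - 2 / 3 * (α * √α)| ≤ 7 * (α ^ 2 * √α) / (2 * π) := fun k => by
    have hk : (1 : ℝ) ≤ (k : ℝ) ^ 2 := one_le_pow₀ (Nat.one_le_cast.2 k.pos)
    refine (abs_integral_sqrt_mul_one_sub_cos_add_sin_sub_le (by positivity) hα.le).trans ?_
    exact div_le_div_of_nonneg_left (by positivity) (by positivity)
      (le_mul_of_one_le_right (by positivity) hk)
  have hsum := abs_tsum_mul_sub_le hasSum_inv_sq_pnat (fun k => by positivity) hI
  calc _ = |1 / (2 * π) *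
        (∑' k : ℕ+, ((k : ℝ) ^ 2)⁻¹ * I k - π ^ 2 / 6 * (2 / 3 * (α * √α)))| := by
        congr 1
        field_simp
        ring
    _ ≤ 1 / (2 * π) * (π ^ 2 / 6 * (7 * (α ^ 2 * √α) / (2 * π))) := by
        rw [abs_mul, abs_of_pos (by positivity)]
        exact mul_le_mul_of_nonneg_left hsum (by positivity)
    _ = 7 / 24 * (α ^ 2 * √α) := by field_simp; ring
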